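/- Let T(x) = √(1-2x), H₀(x) = 1/40 − T²/12 + T⁴/8 − T⁵/15, and H₁(x) = (1/24)·log(1/T) + (1/24)·(1−T) for 0 ≤ x < 1/2. Then x·H₁''(x) + (1/2)·H₁'(x) − (1/2)·H₀''(x)·H₁''(x) − (1/24)·H₀''''(x) = 0. -/

import Mathlib

noncomputable def H0 : ℝ → ℝ := fun x =>
  1/40 - (Real.sqrt (1 - 2*x))^2/12 + (Real.sqrt (1 - 2*x))^4/8
    - (Real.sqrt (1 - 2*x))^5/15

noncomputable def H1 : ℝ → ℝ := fun x =>
  (1/24) * Real.log (1 / Real.sqrt (1 - 2*x)) + (1/24) * (1 - Real.sqrt (1 - 2*x))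

/-!
Both `H0` and `H1` are functions of `t = √(1 - 2x)`, and in this variable `d/dx = -(1/t) d/dt`.
Differentiating repeatedly gives `H0'' = 1 - t`, `H0'''' = t⁻³`, `H1' = (t⁻² + t⁻¹)/24` and
`H1'' = (2t⁻⁴ + t⁻³)/24`; substituting `x = (1 - t²)/2` the identity becomes a polynomial identity
in `t` after clearing denominators.
-/

theorem hasDerivAt_sqrt_one_sub_two_mul {x : ℝ} (hx : x < 1/2) :
    HasDerivAt (fun z => √(1 - 2 * z)) (-(√(1 - 2 * x))⁻¹) x := by
  have hpos : 0 < 1 - 2 * x := by linarith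
  have hsqrt : √(1 - 2 * x) ≠ 0 := Real.sqrt_ne_zero'.mpr hpos
  exact ((((hasDerivAt_id x).const_mul 2).const_sub 1).sqrt hpos.ne').congr_deriv
    (by simp only [id]; field_simp)

theorem deriv_comp_sqrt_one_sub_two_mul {f g : ℝ → ℝ}
    (hf : ∀ t, 0 < t → HasDerivAt f (-t * g t) t) {x : ℝ} (hx : x < 1/2) :
    deriv (fun z => f √(1 - 2 * z)) x = g √(1 - 2 * x) := by
  have hpos : 0 < √(1 - 2 * x) := Real.sqrt_pos.mpr (by linarith)
  have h := (hf _ hpos).comp x (hasDerivAt_sqrt_one_sub_two_mul hx)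
  rw [← Function.comp_def, h.deriv]
  field_simp

theorem iteratedDeriv_succ_comp_sqrt_one_sub_two_mul {f g : ℝ → ℝ}
    (hf : ∀ t, 0 < t → HasDerivAt f (-t * g t) t) (n : ℕ) {x : ℝ} (hx : x < 1/2) :
    iteratedDeriv (n + 1) (fun z => f √(1 - 2 * z)) x =
      iteratedDeriv n (fun z => g √(1 - 2 * z)) x := by
  have hderiv : deriv (fun z => f √(1 - 2 * z)) =ᶠ[nhds x] fun z => g √(1 - 2 * z) := by
    filter_upwards [Iio_mem_nhds hx] with y hy using deriv_comp_sqrt_one_sub_two_mul hf hy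
  rw [iteratedDeriv_succ']
  exact (hderiv.iteratedDeriv n).eq_of_nhds

theorem iteratedDeriv_add_two_H0 (n : ℕ) {x : ℝ} (hx : x < 1/2) :
    iteratedDeriv (n + 2) H0 x = iteratedDeriv n (fun z => 1 - √(1 - 2 * z)) x := by
  have hH0 : ∀ t : ℝ, HasDerivAt (fun t => 1/40 - t^2/12 + t^4/8 - t^5/15)
      (-t * (1/6 - t^2/2 + t^3/3)) t := fun t =>
    (((((hasDerivAt_pow 2 t).div_const 12).const_sub (1/40)).add
      ((hasDerivAt_pow 4 t).div_const 8)).sub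
        ((hasDerivAt_pow 5 t).div_const 15)).congr_deriv (by norm_num; ring)
  have hH0' : ∀ t : ℝ, HasDerivAt (fun t => 1/6 - t^2/2 + t^3/3) (-t * (1 - t)) t := fun t =>
    ((((hasDerivAt_pow 2 t).div_const 2).const_sub (1/6)).add
      ((hasDerivAt_pow 3 t).div_const 3)).congr_deriv (by norm_num; ring)
  rw [show H0 = fun z => (fun t => 1/40 - t^2/12 + t^4/8 - t^5/15) √(1 - 2 * z) from rfl,
    iteratedDeriv_succ_comp_sqrt_one_sub_two_mul (fun t _ => hH0 t) _ hx,
    iteratedDeriv_succ_comp_sqrt_one_sub_two_mul (fun t _ => hH0' t) _ hx]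

theorem iteratedDeriv_two_H0 {x : ℝ} (hx : x < 1/2) :
    iteratedDeriv 2 H0 x = 1 - √(1 - 2 * x) := by
  rw [iteratedDeriv_add_two_H0 0 hx, iteratedDeriv_zero]

theorem iteratedDeriv_four_H0 {x : ℝ} (hx : x < 1/2) :
    iteratedDeriv 4 H0 x = (√(1 - 2 * x) ^ 3)⁻¹ := by
  have hsub : ∀ t : ℝ, 0 < t → HasDerivAt (fun t => 1 - t) (-t * t⁻¹) t := fun t ht =>
    ((hasDerivAt_id t).const_sub 1).congr_deriv (by field_simp)
  have hinv : ∀ t : ℝ, 0 < t → HasDerivAt (fun t => t⁻¹) (-t * (t ^ 3)⁻¹) t := fun t ht =>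
    (hasDerivAt_inv ht.ne').congr_deriv (by field_simp)
  rw [iteratedDeriv_add_two_H0 2 hx, iteratedDeriv_succ_comp_sqrt_one_sub_two_mul hsub 1 hx,
    iteratedDeriv_succ_comp_sqrt_one_sub_two_mul hinv 0 hx, iteratedDeriv_zero]

theorem iteratedDeriv_add_one_H1 (n : ℕ) {x : ℝ} (hx : x < 1/2) :
    iteratedDeriv (n + 1) H1 x =
      iteratedDeriv n (fun z => 1/24 * ((√(1 - 2 * z) ^ 2)⁻¹ + (√(1 - 2 * z))⁻¹)) x := by
  have hH1 : ∀ t : ℝ, 0 < t → HasDerivAt (fun t => 1/24 * Real.log (1 / t) + 1/24 * (1 - t))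
      (-t * (1/24 * ((t ^ 2)⁻¹ + t⁻¹))) t := fun t ht => by
    have hlog : HasDerivAt (fun t => Real.log (1 / t)) (-t⁻¹) t := by
      simp only [one_div, Real.log_inv]
      exact (Real.hasDerivAt_log ht.ne').neg
    exact ((hlog.const_mul (1/24)).add
      (((hasDerivAt_id t).const_sub 1).const_mul (1/24))).congr_deriv (by field_simp; ring)
  exact iteratedDeriv_succ_comp_sqrt_one_sub_two_mul hH1 n hx

theorem deriv_H1 {x : ℝ} (hx : x < 1/2) :
    deriv H1 x = 1/24 * ((√(1 - 2 * x) ^ 2)⁻¹ + (√(1 - 2 * x))⁻¹) := by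
  rw [← iteratedDeriv_one, iteratedDeriv_add_one_H1 0 hx, iteratedDeriv_zero]

theorem iteratedDeriv_two_H1 {x : ℝ} (hx : x < 1/2) :
    iteratedDeriv 2 H1 x = 1/24 * (2 * (√(1 - 2 * x) ^ 4)⁻¹ + (√(1 - 2 * x) ^ 3)⁻¹) := by
  have hH1' : ∀ t : ℝ, 0 < t → HasDerivAt (fun t => 1/24 * ((t ^ 2)⁻¹ + t⁻¹))
      (-t * (1/24 * (2 * (t ^ 4)⁻¹ + (t ^ 3)⁻¹))) t := fun t ht =>
    ((((hasDerivAt_pow 2 t).inv (pow_ne_zero 2 ht.ne')).add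
      (hasDerivAt_inv ht.ne')).const_mul (1/24)).congr_deriv (by field_simp; ring)
  rw [iteratedDeriv_add_one_H1 1 hx, iteratedDeriv_succ_comp_sqrt_one_sub_two_mul hH1' 0 hx,
    iteratedDeriv_zero]

theorem stmt4_general (x : ℝ) (hx : x < 1/2) :
    x * iteratedDeriv 2 H1 x + (1/2) * deriv H1 x
      - (1/2) * iteratedDeriv 2 H0 x * iteratedDeriv 2 H1 x
      - (1/24) * iteratedDeriv 4 H0 x = 0 := by
  rw [iteratedDeriv_two_H1 hx, deriv_H1 hx, iteratedDeriv_two_H0 hx, iteratedDeriv_four_H0 hx]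
  have ht : √(1 - 2 * x) ≠ 0 := (Real.sqrt_pos.mpr (by linarith)).ne'
  have hx_eq : x = (1 - √(1 - 2 * x) ^ 2) / 2 := by
    rw [Real.sq_sqrt (by linarith)]
    ring
  generalize √(1 - 2 * x) = t at ht hx_eq ⊢
  subst hx_eq
  field_simp
  ring

theorem stmt4 (x : ℝ) (hx0 : 0 ≤ x) (hx : x < 1/2) :
    x * iteratedDeriv 2 H1 x + (1/2) * deriv H1 x
      - (1/2) * iteratedDeriv 2 H0 x * iteratedDeriv 2 H1 x
      - (1/24) * iteratedDeriv 4 H0 x = 0 :=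
  stmt4_general x hx
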